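/- arXiv:1801.04068 — 2 statements merged into one kernel-verified Lean document; each statement's English description precedes it below -/
import Mathlib

section
/- Let X, Λ, S be mutually independent random variables with X exponentially distributed with rate λ₁, Λ exponentially distributed with rate λ−λ₁ (0 < λ₁ < λ), and S a nonnegative random variable with P(S > 0) > 0. Then for every real s < λ, the conditional moment generating function of X given the event {X < min(S,Λ)} satisfies E[e^{sX} · 1_{X < min(S,Λ)}] / P(X < min(S,Λ)) = λ(1 − P_{λ−s}) / ((λ−s)(1 − P_λ)), where P_x := E[e^{−xS}]. -/
open MeasureTheory ProbabilityTheory Real Set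

/-! Condition on `X = x` and `S = t`: the event `{X < min S Λ}` then asks for `x < t` and
`Λ > x`, the latter of probability `e^{-(λ-λ₁)x}`. Since
`e^{sx} e^{-(λ-λ₁)x} λ₁e^{-λ₁x} = (λ₁/(λ-s)) (λ-s)e^{-(λ-s)x}` is again an exponential density up to
a constant, integrating over `x < t` gives `(λ₁/(λ-s)) (1 - e^{-(λ-s)t})`, and integrating over
the law of `S` gives `(λ₁/(λ-s)) (1 - P_{λ-s})`. The case `s = 0` is `P(X < min S Λ)`, which is
positive because `P_λ < 1` when `S > 0` with positive probability. -/

section ExpNegMul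

variable {α : Type*} [MeasurableSpace α] {μ : Measure α} {f : α → ℝ} {a : ℝ}

lemma exp_neg_mul_le_one (ha : 0 ≤ a) {x : ℝ} (hx : 0 ≤ x) : exp (-a * x) ≤ 1 :=
  exp_le_one_iff.2 (by nlinarith)

lemma integrable_exp_neg_mul [IsFiniteMeasure μ] (ha : 0 ≤ a) (hf : AEMeasurable f μ)
    (hf₀ : ∀ᵐ x ∂μ, 0 ≤ f x) : Integrable (fun x ↦ exp (-a * f x)) μ := by
  refine (integrable_const 1).mono' (hf.const_mul _).exp.aestronglyMeasurable ?_
  filter_upwards [hf₀] with x hx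
  rw [norm_of_nonneg (exp_pos _).le]
  exact exp_neg_mul_le_one ha hx

lemma integral_exp_neg_mul_le_one [IsProbabilityMeasure μ] (ha : 0 ≤ a) (hf₀ : ∀ᵐ x ∂μ, 0 ≤ f x) :
    ∫ x, exp (-a * f x) ∂μ ≤ 1 := by
  calc ∫ x, exp (-a * f x) ∂μ ≤ ∫ _, (1 : ℝ) ∂μ :=
        integral_mono_of_nonneg (.of_forall fun _ ↦ (exp_pos _).le) (integrable_const 1)
          (hf₀.mono fun x hx ↦ exp_neg_mul_le_one ha hx)
    _ = 1 := by simp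

lemma integral_exp_neg_mul_lt_one [IsProbabilityMeasure μ] (ha : 0 < a) (hf : AEMeasurable f μ)
    (hf₀ : ∀ᵐ x ∂μ, 0 ≤ f x) (hpos : 0 < μ {x | 0 < f x}) :
    ∫ x, exp (-a * f x) ∂μ < 1 := by
  have hint := integrable_exp_neg_mul ha.le hf hf₀
  have hgap : 0 < ∫ x, (1 - exp (-a * f x)) ∂μ := by
    rw [integral_pos_iff_support_of_nonneg_ae
      (hf₀.mono fun x hx ↦ sub_nonneg.2 (exp_neg_mul_le_one ha.le hx))
      ((integrable_const 1).sub hint)]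
    refine hpos.trans_le (measure_mono fun x (hx : 0 < f x) ↦ ?_)
    exact sub_ne_zero.2 (exp_lt_one_iff.2 (by nlinarith)).ne'
  rw [integral_sub (integrable_const 1) hint, integral_const, probReal_univ, one_smul] at hgap
  linarith

end ExpNegMul

namespace ProbabilityTheory

lemma expMeasure_Ioi {r x : ℝ} (hr : 0 < r) (hx : 0 ≤ x) :
    expMeasure r (Ioi x) = ENNReal.ofReal (exp (-r * x)) := by
  have := isProbabilityMeasure_expMeasure hr
  have hIic : expMeasure r (Iic x) = ENNReal.ofReal (1 - exp (-r * x)) := by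
    rw [expMeasure, gammaMeasure, withDensity_apply _ measurableSet_Iic]
    exact (lintegral_exponentialPDF_eq_antiDeriv hr x).trans (by rw [if_pos hx, neg_mul])
  rw [← compl_Iic, prob_compl_eq_one_sub measurableSet_Iic, hIic, ← ENNReal.ofReal_one,
    ← ENNReal.ofReal_sub _ (sub_nonneg.2 (exp_neg_mul_le_one hr.le hx)), sub_sub_cancel]

lemma ofReal_exp_mul_mul_exponentialPDF {r b : ℝ} (hr : 0 ≤ r) (hb : b < r) (x : ℝ) :
    ENNReal.ofReal (exp (b * x)) * exponentialPDF r x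
      = ENNReal.ofReal (r / (r - b)) * exponentialPDF (r - b) x := by
  rcases lt_or_ge x 0 with hx | hx
  · simp [exponentialPDF_of_neg hx]
  rw [exponentialPDF_of_nonneg hx, exponentialPDF_of_nonneg hx,
    ← ENNReal.ofReal_mul (by positivity), ← ENNReal.ofReal_mul (div_nonneg hr (by linarith))]
  congr 1
  have : r - b ≠ 0 := by linarith
  field_simp
  rw [mul_right_comm, ← exp_add]
  ring_nf

lemma setLIntegral_Iio_exponentialPDF {r : ℝ} (hr : 0 < r) {t : ℝ} (ht : 0 ≤ t) :
    ∫⁻ x in Iio t, exponentialPDF r x = ENNReal.ofReal (1 - exp (-r * t)) := by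
  rw [setLIntegral_congr Iio_ae_eq_Iic, lintegral_exponentialPDF_eq_antiDeriv hr t, if_pos ht,
    neg_mul]

lemma exponentialPDF_mul_ofReal_exp_mul_expMeasure_Ioi {r₁ r₂ s : ℝ} (hr₁ : 0 < r₁)
    (hr₂ : 0 < r₂) (hs : s < r₁ + r₂) (x : ℝ) :
    exponentialPDF r₁ x * (ENNReal.ofReal (exp (s * x)) * expMeasure r₂ (Ioi x))
      = ENNReal.ofReal (r₁ / (r₁ + r₂ - s)) * exponentialPDF (r₁ + r₂ - s) x := by
  rcases lt_or_ge x 0 with hx | hx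
  · simp [exponentialPDF_of_neg hx]
  have hb : s - r₂ < r₁ := by linarith
  rw [expMeasure_Ioi hr₂ hx, ← ENNReal.ofReal_mul (exp_pos _).le, ← exp_add, mul_comm,
    show s * x + -r₂ * x = (s - r₂) * x by ring,
    ofReal_exp_mul_mul_exponentialPDF hr₁.le hb, show r₁ - (s - r₂) = r₁ + r₂ - s by ring]

lemma lintegral_prod_expMeasure_indicator_lt_min {r₁ r₂ s t : ℝ} (hr₁ : 0 < r₁)
    (hr₂ : 0 < r₂) (hs : s < r₁ + r₂) (ht : 0 ≤ t) :
    ∫⁻ q, {q : ℝ × ℝ | q.1 < min t q.2}.indicator (fun q ↦ ENNReal.ofReal (exp (s * q.1))) q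
        ∂(expMeasure r₁).prod (expMeasure r₂)
      = ENNReal.ofReal (r₁ / (r₁ + r₂ - s) * (1 - exp (-(r₁ + r₂ - s) * t))) := by
  have := isProbabilityMeasure_expMeasure hr₂
  have hB : MeasurableSet {q : ℝ × ℝ | q.1 < min t q.2} :=
    measurableSet_lt (by fun_prop) (by fun_prop)
  have hinner : ∀ x, ∫⁻ y, {q : ℝ × ℝ | q.1 < min t q.2}.indicator
      (fun q ↦ ENNReal.ofReal (exp (s * q.1))) (x, y) ∂expMeasure r₂
      = (Iio t).indicator (fun x ↦ ENNReal.ofReal (exp (s * x)) * expMeasure r₂ (Ioi x)) x := by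
    intro x
    by_cases hx : x < t
    · rw [indicator_of_mem (mem_Iio.2 hx), ← lintegral_indicator_const measurableSet_Ioi]
      refine lintegral_congr fun y ↦ ?_
      simp [indicator, hx]
    · simp [indicator, hx]
  rw [lintegral_prod _ ((measurable_fst.const_mul s).exp.ennreal_ofReal.indicator hB).aemeasurable]
  simp_rw [hinner]
  have hsurv : Measurable fun x ↦ expMeasure r₂ (Ioi x) :=
    Antitone.measurable fun a b hab ↦ measure_mono (Ioi_subset_Ioi hab)
  rw [lintegral_indicator measurableSet_Iio,
    show expMeasure r₁ = volume.withDensity (exponentialPDF r₁) from rfl,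
    setLIntegral_withDensity_eq_setLIntegral_mul _ (f := exponentialPDF r₁)
      (g := fun x ↦ ENNReal.ofReal (exp (s * x)) * expMeasure r₂ (Ioi x))
      (measurable_exponentialPDFReal r₁).ennreal_ofReal
      ((measurable_id.const_mul s).exp.ennreal_ofReal.mul hsurv) measurableSet_Iio]
  simp only [Pi.mul_apply, exponentialPDF_mul_ofReal_exp_mul_expMeasure_Ioi hr₁ hr₂ hs]
  rw [lintegral_const_mul' _ _ ENNReal.ofReal_ne_top,
    setLIntegral_Iio_exponentialPDF (by linarith) ht,
    ← ENNReal.ofReal_mul (div_nonneg hr₁.le (by linarith))]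



lemma lintegral_prod_prod_expMeasure_indicator_lt_min {r₁ r₂ s : ℝ} (hr₁ : 0 < r₁)
    (hr₂ : 0 < r₂) (hs : s < r₁ + r₂) {ν : Measure ℝ} [IsProbabilityMeasure ν]
    (hν : ∀ᵐ t ∂ν, 0 ≤ t) :
    ∫⁻ p, {p : (ℝ × ℝ) × ℝ | p.1.1 < min p.2 p.1.2}.indicator
        (fun p ↦ ENNReal.ofReal (exp (s * p.1.1))) p
        ∂((expMeasure r₁).prod (expMeasure r₂)).prod ν
      = ENNReal.ofReal (r₁ / (r₁ + r₂ - s) * (1 - ∫ t, exp (-(r₁ + r₂ - s) * t) ∂ν)) := by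
  have := isProbabilityMeasure_expMeasure hr₁
  have := isProbabilityMeasure_expMeasure hr₂
  have ha : 0 < r₁ + r₂ - s := by linarith
  have hB : MeasurableSet {p : (ℝ × ℝ) × ℝ | p.1.1 < min p.2 p.1.2} :=
    measurableSet_lt (by fun_prop) (by fun_prop)
  have hint := integrable_exp_neg_mul (f := fun t ↦ t) ha.le aemeasurable_id' hν
  have hF : Measurable ({p : (ℝ × ℝ) × ℝ | p.1.1 < min p.2 p.1.2}.indicator
      fun p ↦ ENNReal.ofReal (exp (s * p.1.1))) :=
    ((measurable_fst.comp measurable_fst).const_mul s).exp.ennreal_ofReal.indicator hB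
  have hRHS : r₁ / (r₁ + r₂ - s) * (1 - ∫ t, exp (-(r₁ + r₂ - s) * t) ∂ν)
      = ∫ t, r₁ / (r₁ + r₂ - s) * (1 - exp (-(r₁ + r₂ - s) * t)) ∂ν := by
    rw [integral_const_mul, integral_sub (integrable_const 1) hint, integral_const, probReal_univ,
      one_smul]
  have hint' : Integrable (fun t ↦ r₁ / (r₁ + r₂ - s) * (1 - exp (-(r₁ + r₂ - s) * t))) ν :=
    ((integrable_const 1).sub hint).const_mul _
  rw [lintegral_prod_symm' _ hF, hRHS,
    ofReal_integral_eq_lintegral_ofReal hint'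
      (hν.mono fun t ht ↦ mul_nonneg (div_nonneg hr₁.le ha.le)
        (sub_nonneg.2 (exp_neg_mul_le_one ha.le ht)))]
  exact lintegral_congr_ae (hν.mono fun t ht ↦
    lintegral_prod_expMeasure_indicator_lt_min hr₁ hr₂ hs ht)

lemma iIndepFun.map_prodMk_prodMk_eq_prod {Ω β : Type*} [MeasurableSpace Ω] [MeasurableSpace β]
    {μ : Measure Ω} [IsProbabilityMeasure μ] {X Y Z : Ω → β} (hX : Measurable X)
    (hY : Measurable Y) (hZ : Measurable Z) (hInd : iIndepFun ![X, Y, Z] μ) :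
    μ.map (fun ω ↦ ((X ω, Y ω), Z ω)) = ((μ.map X).prod (μ.map Y)).prod (μ.map Z) := by
  have hm : ∀ i, Measurable (![X, Y, Z] i) := fun i ↦ by fin_cases i <;> assumption
  have hXY_Z : IndepFun (fun ω ↦ (X ω, Y ω)) Z μ := by
    simpa using hInd.indepFun_prodMk hm 0 1 2 (by decide) (by decide)
  have hX_Y : IndepFun X Y μ := by simpa using hInd.indepFun (show (0 : Fin 3) ≠ 1 by decide)
  rw [(indepFun_iff_map_prod_eq_prod_map_map (hX.prodMk hY).aemeasurable hZ.aemeasurable).1 hXY_Z,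
    (indepFun_iff_map_prod_eq_prod_map_map hX.aemeasurable hY.aemeasurable).1 hX_Y]

theorem setIntegral_exp_mul_of_lt_min {Ω : Type*} [MeasurableSpace Ω] {μ : Measure Ω}
    [IsProbabilityMeasure μ] {X Λ S : Ω → ℝ} (hXm : Measurable X) (hΛm : Measurable Λ)
    (hSm : Measurable S) (hS₀ : ∀ᵐ ω ∂μ, 0 ≤ S ω) {r₁ r₂ s : ℝ} (hr₁ : 0 < r₁) (hr₂ : 0 < r₂)
    (hX : μ.map X = expMeasure r₁) (hΛ : μ.map Λ = expMeasure r₂)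
    (hInd : iIndepFun ![X, Λ, S] μ) (hs : s < r₁ + r₂) :
    ∫ ω in {ω | X ω < min (S ω) (Λ ω)}, exp (s * X ω) ∂μ
      = r₁ / (r₁ + r₂ - s) * (1 - ∫ ω, exp (-(r₁ + r₂ - s) * S ω) ∂μ) := by
  have ha : 0 ≤ r₁ + r₂ - s := by linarith
  have hT : Measurable fun ω ↦ ((X ω, Λ ω), S ω) := (hXm.prodMk hΛm).prodMk hSm
  have hB : MeasurableSet {p : (ℝ × ℝ) × ℝ | p.1.1 < min p.2 p.1.2} :=
    measurableSet_lt (by fun_prop) (by fun_prop)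
  have hν : ∀ᵐ t ∂μ.map S, 0 ≤ t := (ae_map_iff hSm.aemeasurable measurableSet_Ici).2 hS₀
  have := Measure.isProbabilityMeasure_map (μ := μ) hSm.aemeasurable
  rw [integral_eq_lintegral_of_nonneg_ae (.of_forall fun ω ↦ (exp_pos _).le)
      (hXm.const_mul s).exp.aestronglyMeasurable.restrict,
    show {ω | X ω < min (S ω) (Λ ω)} = (fun ω ↦ ((X ω, Λ ω), S ω)) ⁻¹' {p | p.1.1 < min p.2 p.1.2}
      from rfl,
    ← setLIntegral_map (f := fun p : (ℝ × ℝ) × ℝ ↦ ENNReal.ofReal (exp (s * p.1.1))) hB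
      (by fun_prop) hT,
    hInd.map_prodMk_prodMk_eq_prod hXm hΛm hSm, hX, hΛ, ← lintegral_indicator hB,
    lintegral_prod_prod_expMeasure_indicator_lt_min hr₁ hr₂ hs hν,
    ENNReal.toReal_ofReal (mul_nonneg (div_nonneg hr₁.le ha)
      (sub_nonneg.2 (integral_exp_neg_mul_le_one ha hν))),
    integral_map hSm.aemeasurable (measurable_id'.const_mul _).exp.aestronglyMeasurable]

end ProbabilityTheory

/-- Conditional MGF of `X` given `{X < min(S, Λ)}`: for every `s < λ`,
`E[e^{s X} | X < min(S, Λ)] = λ(1 - P_{λ-s}) / ((λ-s)(1 - P_λ))` where `P_x = E[e^{-x S}]`. -/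
theorem stmt_4 {Ω : Type*} [MeasurableSpace Ω] (μ : Measure Ω) [IsProbabilityMeasure μ]
    (X Λ S : Ω → ℝ) (hXm : Measurable X) (hΛm : Measurable Λ) (hSm : Measurable S)
    (hSnn : ∀ᵐ ω ∂μ, 0 ≤ S ω) (hSpos : 0 < μ {ω | 0 < S ω})
    (l l1 : ℝ) (hl1 : 0 < l1) (hl : l1 < l)
    (hX : Measure.map X μ = expMeasure l1)
    (hΛ : Measure.map Λ μ = expMeasure (l - l1))
    (hInd : iIndepFun ![X, Λ, S] μ)
    (P : ℝ → ℝ) (hP : ∀ x : ℝ, P x = ∫ ω, Real.exp (-x * S ω) ∂μ) :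
    ∀ s : ℝ, s < l →
      (∫ ω in {ω | X ω < min (S ω) (Λ ω)}, Real.exp (s * X ω) ∂μ)
          / (μ {ω | X ω < min (S ω) (Λ ω)}).toReal
        = l * (1 - P (l - s)) / ((l - s) * (1 - P l)) := by
  intro s hs
  have hrate : l1 + (l - l1) = l := add_sub_cancel _ _
  have hl₂ : 0 < l - l1 := by linarith
  have hnum := setIntegral_exp_mul_of_lt_min hXm hΛm hSm hSnn hl1 hl₂ hX hΛ hInd (s := s)
    (by linarith)
  have hden := setIntegral_exp_mul_of_lt_min hXm hΛm hSm hSnn hl1 hl₂ hX hΛ hInd (s := 0)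
    (by linarith)
  simp only [hrate, ← hP] at hnum
  simp only [hrate, ← hP, zero_mul, exp_zero, sub_zero, setIntegral_const, smul_eq_mul,
    mul_one] at hden
  have hPl : P l < 1 :=
    hP l ▸ integral_exp_neg_mul_lt_one (by linarith) hSm.aemeasurable hSnn hSpos
  rw [hnum, ← measureReal_def, hden]
  have : l - s ≠ 0 := by linarith
  have : 1 - P l ≠ 0 := by linarith
  field_simp
end

section
/- Let X, Λ, S be mutually independent random variables with X exponentially distributed with rate λ₁, Λ exponentially distributed with rate λ−λ₁ (0 < λ₁ < λ), and S a nonnegative random variable with P(S > 0) > 0. Then for every real s < λ, the conditional moment generating function of Λ given the event {Λ < min(S,X)} satisfies E[e^{sΛ} · 1_{Λ < min(S,X)}] / P(Λ < min(S,X)) = λ(1 − P_{λ−s}) / ((λ−s)(1 − P_λ)), where P_x := E[e^{−xS}]. -/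
/-!
Given `(Λ, S)`, the independent clock `X` exceeds `Λ` with probability `e^{-λ₁ Λ}`, so the
numerator is `E[e^{(s - λ₁) Λ}; Λ < S]`. Tilting the `Exp(λ - λ₁)` law of `Λ` by `e^{(s - λ₁) x}`
gives `(λ - λ₁)/(λ - s)` times the `Exp(λ - s)` law, whose mass below `S` is `1 - e^{-(λ - s) S}`.
Hence the numerator is `(λ - λ₁)/(λ - s) · (1 - P_{λ-s})`, and the case `s = 0` gives the
denominator.
-/

open MeasureTheory ProbabilityTheory Real
open scoped ENNReal

namespace ProbabilityTheory

lemma expMeasure_eq_withDensity (r : ℝ) :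
    expMeasure r = volume.withDensity (exponentialPDF r) := rfl

lemma measurable_exponentialPDF (r : ℝ) : Measurable (exponentialPDF r) :=
  (measurable_exponentialPDFReal r).ennreal_ofReal

lemma ae_nonneg_expMeasure (r : ℝ) : ∀ᵐ x ∂expMeasure r, 0 ≤ x := by
  simp only [ae_iff, not_le]
  rw [Set.Iio_def, expMeasure_eq_withDensity, withDensity_apply _ measurableSet_Iio]
  exact lintegral_exponentialPDF_of_nonpos le_rfl

lemma expMeasure_Iic_of_nonneg {r a : ℝ} (hr : 0 < r) (ha : 0 ≤ a) :
    expMeasure r (Set.Iic a) = ENNReal.ofReal (1 - exp (-(r * a))) := by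
  rw [expMeasure_eq_withDensity, withDensity_apply _ measurableSet_Iic]
  simpa [ha] using lintegral_exponentialPDF_eq_antiDeriv hr a

lemma expMeasure_Ioi_of_nonneg {r a : ℝ} (hr : 0 < r) (ha : 0 ≤ a) :
    expMeasure r (Set.Ioi a) = ENNReal.ofReal (exp (-(r * a))) := by
  have := isProbabilityMeasure_expMeasure hr
  rw [← Set.compl_Iic, prob_compl_eq_one_sub measurableSet_Iic, expMeasure_Iic_of_nonneg hr ha,
    ← ENNReal.ofReal_one, ← ENNReal.ofReal_sub _ (sub_nonneg.mpr (exp_le_one_iff.mpr _)),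
    sub_sub_cancel]
  nlinarith

lemma expMeasure_Iio_of_nonneg {r a : ℝ} (hr : 0 < r) (ha : 0 ≤ a) :
    expMeasure r (Set.Iio a) = ENNReal.ofReal (1 - exp (-(r * a))) := by
  rw [← expMeasure_Iic_of_nonneg hr ha]
  exact measure_congr <| Iio_ae_eq_Iic.filter_mono
    (withDensity_absolutelyContinuous _ _).ae_le

lemma withDensity_exp_mul_expMeasure {m c : ℝ} (hc : c < m) :
    (expMeasure m).withDensity (fun x ↦ ENNReal.ofReal (exp (c * x)))
      = ENNReal.ofReal (m / (m - c)) • expMeasure (m - c) := by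
  rw [expMeasure_eq_withDensity, expMeasure_eq_withDensity,
    ← withDensity_smul _ (measurable_exponentialPDF _),
    ← withDensity_mul _ (measurable_exponentialPDF _) (by fun_prop)]
  refine congrArg _ (funext fun x ↦ ?_)
  rcases lt_or_ge x 0 with hx | hx
  · simp [exponentialPDF_of_neg hx]
  · have hmc : 0 < m - c := sub_pos.mpr hc
    simp only [Pi.mul_apply, Pi.smul_apply, smul_eq_mul]
    rw [exponentialPDF_of_nonneg hx, exponentialPDF_of_nonneg hx,
      ← ENNReal.ofReal_mul' (by positivity), ← ENNReal.ofReal_mul' (by positivity)]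
    congr 1
    rw [mul_assoc, ← exp_add]
    field_simp
    ring_nf

lemma setLIntegral_exp_mul_expMeasure_Iio {m c t : ℝ} (hc : c < m) (ht : 0 ≤ t) :
    ∫⁻ x in Set.Iio t, ENNReal.ofReal (exp (c * x)) ∂expMeasure m
      = ENNReal.ofReal (m / (m - c) * (1 - exp (-((m - c) * t)))) := by
  rw [← withDensity_apply _ measurableSet_Iio, withDensity_exp_mul_expMeasure hc,
    Measure.smul_apply, expMeasure_Iio_of_nonneg (sub_pos.mpr hc) ht, smul_eq_mul,
    ← ENNReal.ofReal_mul' (sub_nonneg.mpr (exp_le_one_iff.mpr _))]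
  nlinarith [sub_pos.mpr hc]

section Independence

variable {Ω α β : Type*} [MeasurableSpace Ω] [MeasurableSpace α] [MeasurableSpace β]
  {μ : Measure Ω} [IsFiniteMeasure μ]

lemma IndepFun.lintegral_comp_prodMk {X : Ω → α} {Y : Ω → β} (hXY : IndepFun X Y μ)
    (hX : Measurable X) (hY : Measurable Y) {f : α × β → ℝ≥0∞} (hf : Measurable f) :
    ∫⁻ ω, f (X ω, Y ω) ∂μ = ∫⁻ x, ∫⁻ y, f (x, y) ∂μ.map Y ∂μ.map X := by
  rw [← lintegral_map hf (hX.prodMk hY),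
    (indepFun_iff_map_prod_eq_prod_map_map hX.aemeasurable hY.aemeasurable).mp hXY,
    lintegral_prod _ hf.aemeasurable]

lemma IndepFun.setLIntegral_lt_of_map_eq_expMeasure {Y : Ω → α} {X : Ω → ℝ}
    (hYX : IndepFun Y X μ) (hY : Measurable Y) (hX : Measurable X) {r : ℝ} (hr : 0 < r)
    (hXexp : μ.map X = expMeasure r) {a : α → ℝ} (ha : Measurable a)
    (ha_nonneg : ∀ᵐ ω ∂μ, 0 ≤ a (Y ω)) {g : α → ℝ≥0∞} (hg : Measurable g) :
    ∫⁻ ω in {ω | a (Y ω) < X ω}, g (Y ω) ∂μ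
      = ∫⁻ ω, g (Y ω) * ENNReal.ofReal (exp (-(r * a (Y ω)))) ∂μ := by
  set f : α × ℝ → ℝ≥0∞ := {p | a p.1 < p.2}.indicator (g ∘ Prod.fst)
  have hf : Measurable f :=
    (hg.comp measurable_fst).indicator (measurableSet_lt (ha.comp measurable_fst) measurable_snd)
  have ha_nonneg' : ∀ᵐ y ∂μ.map Y, 0 ≤ a y :=
    (ae_map_iff hY.aemeasurable (measurableSet_le measurable_const ha)).mpr ha_nonneg
  calc ∫⁻ ω in {ω | a (Y ω) < X ω}, g (Y ω) ∂μ = ∫⁻ ω, f (Y ω, X ω) ∂μ := by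
        rw [← lintegral_indicator (s := {ω | a (Y ω) < X ω}) (measurableSet_lt (ha.comp hY) hX)]
        rfl
    _ = ∫⁻ y, ∫⁻ x, f (y, x) ∂μ.map X ∂μ.map Y := hYX.lintegral_comp_prodMk hY hX hf
    _ = ∫⁻ y, g y * expMeasure r (Set.Ioi (a y)) ∂μ.map Y := by
        congr with y
        rw [hXexp, ← lintegral_indicator_const measurableSet_Ioi]
        rfl
    _ = ∫⁻ y, g y * ENNReal.ofReal (exp (-(r * a y))) ∂μ.map Y :=
        lintegral_congr_ae <| ha_nonneg'.mono fun y hy ↦ by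
          simp only [expMeasure_Ioi_of_nonneg hr hy]
    _ = ∫⁻ ω, g (Y ω) * ENNReal.ofReal (exp (-(r * a (Y ω)))) ∂μ :=
        lintegral_map (by fun_prop) hY

lemma IndepFun.setLIntegral_exp_mul_lt_of_map_eq_expMeasure {L T : Ω → ℝ}
    (hLT : IndepFun L T μ) (hL : Measurable L) (hT : Measurable T) {m c : ℝ} (hc : c < m)
    (hLexp : μ.map L = expMeasure m) (hT_nonneg : ∀ᵐ ω ∂μ, 0 ≤ T ω) :
    ∫⁻ ω in {ω | L ω < T ω}, ENNReal.ofReal (exp (c * L ω)) ∂μ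
      = ∫⁻ ω, ENNReal.ofReal (m / (m - c) * (1 - exp (-((m - c) * T ω)))) ∂μ := by
  set f : ℝ × ℝ → ℝ≥0∞ := {p | p.2 < p.1}.indicator fun p ↦ ENNReal.ofReal (exp (c * p.2))
  have hf : Measurable f :=
    Measurable.indicator (by fun_prop) (measurableSet_lt measurable_snd measurable_fst)
  have hT_nonneg' : ∀ᵐ t ∂μ.map T, 0 ≤ t :=
    (ae_map_iff hT.aemeasurable measurableSet_Ici).mpr hT_nonneg
  calc ∫⁻ ω in {ω | L ω < T ω}, ENNReal.ofReal (exp (c * L ω)) ∂μ = ∫⁻ ω, f (T ω, L ω) ∂μ := by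
        rw [← lintegral_indicator (measurableSet_lt hL hT)]
        rfl
    _ = ∫⁻ t, ∫⁻ x, f (t, x) ∂μ.map L ∂μ.map T := hLT.symm.lintegral_comp_prodMk hT hL hf
    _ = ∫⁻ t, ∫⁻ x in Set.Iio t, ENNReal.ofReal (exp (c * x)) ∂expMeasure m ∂μ.map T := by
        congr with t
        rw [hLexp, ← lintegral_indicator measurableSet_Iio]
        rfl
    _ = ∫⁻ t, ENNReal.ofReal (m / (m - c) * (1 - exp (-((m - c) * t)))) ∂μ.map T :=
        lintegral_congr_ae <| hT_nonneg'.mono fun t ht ↦ setLIntegral_exp_mul_expMeasure_Iio hc ht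
    _ = _ := lintegral_map (by fun_prop) hT

end Independence

section Race

variable {Ω : Type*} [MeasurableSpace Ω] {μ : Measure Ω}

lemma setLIntegral_exp_mul_lt_min [IsFiniteMeasure μ] {X Λ S : Ω → ℝ} (hX : Measurable X)
    (hΛ : Measurable Λ) (hS : Measurable S) (hΛS_X : IndepFun (fun ω ↦ (Λ ω, S ω)) X μ)
    (hΛS : IndepFun Λ S μ) {l l1 s : ℝ} (hl1 : 0 < l1) (hs : s < l)
    (hXexp : μ.map X = expMeasure l1) (hΛexp : μ.map Λ = expMeasure (l - l1))
    (hS_nonneg : ∀ᵐ ω ∂μ, 0 ≤ S ω) :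
    ∫⁻ ω in {ω | Λ ω < min (S ω) (X ω)}, ENNReal.ofReal (exp (s * Λ ω)) ∂μ
      = ∫⁻ ω, ENNReal.ofReal ((l - l1) / (l - s) * (1 - exp (-((l - s) * S ω)))) ∂μ := by
  set g : ℝ × ℝ → ℝ≥0∞ := {p | p.1 < p.2}.indicator fun p ↦ ENNReal.ofReal (exp (s * p.1))
  have hg : Measurable g :=
    Measurable.indicator (by fun_prop) (measurableSet_lt measurable_fst measurable_snd)
  have hΛ_nonneg : ∀ᵐ ω ∂μ, 0 ≤ Λ ω :=
    ae_of_ae_map hΛ.aemeasurable (hΛexp ▸ ae_nonneg_expMeasure _)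
  have hkill := hΛS_X.setLIntegral_lt_of_map_eq_expMeasure (hΛ.prodMk hS) hX hl1 hXexp
    measurable_fst hΛ_nonneg hg
  have htilt := hΛS.setLIntegral_exp_mul_lt_of_map_eq_expMeasure hΛ hS
    (show s - l1 < l - l1 by linarith) hΛexp hS_nonneg
  rw [show l - l1 - (s - l1) = l - s by ring] at htilt
  rw [← htilt]
  calc ∫⁻ ω in {ω | Λ ω < min (S ω) (X ω)}, ENNReal.ofReal (exp (s * Λ ω)) ∂μ
        = ∫⁻ ω in {ω | (Λ ω, S ω).1 < X ω}, g (Λ ω, S ω) ∂μ := by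
          rw [← lintegral_indicator (measurableSet_lt hΛ (hS.min hX)),
            ← lintegral_indicator (measurableSet_lt hΛ hX)]
          congr with ω
          by_cases hΛS_lt : Λ ω < S ω <;> simp [g, Set.indicator_apply, hΛS_lt]
    _ = ∫⁻ ω, g (Λ ω, S ω) * ENNReal.ofReal (exp (-(l1 * Λ ω))) ∂μ := hkill
    _ = _ := by
          rw [← lintegral_indicator (measurableSet_lt hΛ hS)]
          congr with ω
          by_cases hΛS_lt : Λ ω < S ω
          · simp only [g, Set.indicator_of_mem (show ω ∈ {ω | Λ ω < S ω} from hΛS_lt),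
              Set.indicator_of_mem (show (Λ ω, S ω) ∈ {p : ℝ × ℝ | p.1 < p.2} from hΛS_lt),
              ← ENNReal.ofReal_mul (exp_pos _).le, ← exp_add]
            ring_nf
          · simp [g, hΛS_lt]

lemma setIntegral_exp_mul_lt_min [IsProbabilityMeasure μ] {X Λ S : Ω → ℝ} (hX : Measurable X)
    (hΛ : Measurable Λ) (hS : Measurable S) (hΛS_X : IndepFun (fun ω ↦ (Λ ω, S ω)) X μ)
    (hΛS : IndepFun Λ S μ) {l l1 s : ℝ} (hl1 : 0 < l1) (hl : l1 < l) (hs : s < l)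
    (hXexp : μ.map X = expMeasure l1) (hΛexp : μ.map Λ = expMeasure (l - l1))
    (hS_nonneg : ∀ᵐ ω ∂μ, 0 ≤ S ω) :
    ∫ ω in {ω | Λ ω < min (S ω) (X ω)}, exp (s * Λ ω) ∂μ
      = (l - l1) / (l - s) * (1 - ∫ ω, exp (-(l - s) * S ω) ∂μ) := by
  have hexp_le_one : ∀ᵐ ω ∂μ, exp (-(l - s) * S ω) ≤ 1 :=
    hS_nonneg.mono fun ω hω ↦ exp_le_one_iff.mpr (by nlinarith)
  have hint : Integrable (fun ω ↦ exp (-(l - s) * S ω)) μ :=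
    .of_bound (by fun_prop) 1 (hexp_le_one.mono fun ω hω ↦ by simpa using hω)
  have hC : 0 ≤ (l - l1) / (l - s) := div_nonneg (by linarith) (by linarith)
  calc ∫ ω in {ω | Λ ω < min (S ω) (X ω)}, exp (s * Λ ω) ∂μ
        = (∫⁻ ω in {ω | Λ ω < min (S ω) (X ω)}, ENNReal.ofReal (exp (s * Λ ω)) ∂μ).toReal :=
          integral_eq_lintegral_of_nonneg_ae (.of_forall fun _ ↦ (exp_pos _).le) (by fun_prop)
    _ = ∫ ω, (l - l1) / (l - s) * (1 - exp (-(l - s) * S ω)) ∂μ := by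
          rw [setLIntegral_exp_mul_lt_min hX hΛ hS hΛS_X hΛS hl1 hs hXexp hΛexp hS_nonneg,
            integral_eq_lintegral_of_nonneg_ae
              (hexp_le_one.mono fun ω hω ↦ mul_nonneg hC (by linarith)) (by fun_prop)]
          simp only [neg_mul]
    _ = (l - l1) / (l - s) * (1 - ∫ ω, exp (-(l - s) * S ω) ∂μ) := by
          rw [integral_const_mul, integral_sub (integrable_const 1) hint, integral_const,
            probReal_univ, one_smul]

end Race

end ProbabilityTheory

theorem stmt_5_general {Ω : Type*} [MeasurableSpace Ω] (μ : Measure Ω) [IsProbabilityMeasure μ]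
    (X Λ S : Ω → ℝ) (hXm : Measurable X) (hΛm : Measurable Λ) (hSm : Measurable S)
    (hSnn : ∀ᵐ ω ∂μ, 0 ≤ S ω)
    (l l1 : ℝ) (hl1 : 0 < l1) (hl : l1 < l)
    (hX : Measure.map X μ = expMeasure l1)
    (hΛ : Measure.map Λ μ = expMeasure (l - l1))
    (hInd : iIndepFun ![X, Λ, S] μ)
    (P : ℝ → ℝ) (hP : ∀ x : ℝ, P x = ∫ ω, Real.exp (-x * S ω) ∂μ) :
    ∀ s : ℝ, s < l →
      (∫ ω in {ω | Λ ω < min (S ω) (X ω)}, Real.exp (s * Λ ω) ∂μ)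
          / (μ {ω | Λ ω < min (S ω) (X ω)}).toReal
        = l * (1 - P (l - s)) / ((l - s) * (1 - P l)) := by
  intro s hs
  have hm : ∀ i, Measurable (![X, Λ, S] i) := by
    intro i
    fin_cases i <;> assumption
  have hΛS_X : IndepFun (fun ω ↦ (Λ ω, S ω)) X μ :=
    hInd.indepFun_prodMk hm 1 2 0 (by decide) (by decide)
  have hΛS : IndepFun Λ S μ := hInd.indepFun (show (1 : Fin 3) ≠ 2 by decide)
  have hnum := setIntegral_exp_mul_lt_min hXm hΛm hSm hΛS_X hΛS hl1 hl hs hX hΛ hSnn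
  have hden := setIntegral_exp_mul_lt_min hXm hΛm hSm hΛS_X hΛS hl1 hl (s := 0) (by linarith)
    hX hΛ hSnn
  simp only [zero_mul, exp_zero, sub_zero, setIntegral_const, smul_eq_mul, mul_one] at hden
  rw [hnum, ← measureReal_def, hden, hP, hP]
  have hll1 : l - l1 ≠ 0 := by linarith
  rcases eq_or_ne (1 - ∫ ω, exp (-l * S ω) ∂μ) 0 with hP0 | hP0
  · -- both sides are junk `_ / 0 = 0`
    rw [hP0, mul_zero, mul_zero, div_zero, div_zero]
  · field_simp

/-- Conditional MGF of `Λ` given `{Λ < min(S, X)}`: for every `s < λ`,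
`E[e^{s Λ} | Λ < min(S, X)] = λ(1 - P_{λ-s}) / ((λ-s)(1 - P_λ))` where `P_x = E[e^{-x S}]`. -/
theorem stmt_5 {Ω : Type*} [MeasurableSpace Ω] (μ : Measure Ω) [IsProbabilityMeasure μ]
    (X Λ S : Ω → ℝ) (hXm : Measurable X) (hΛm : Measurable Λ) (hSm : Measurable S)
    (hSnn : ∀ᵐ ω ∂μ, 0 ≤ S ω) (hSpos : 0 < μ {ω | 0 < S ω})
    (l l1 : ℝ) (hl1 : 0 < l1) (hl : l1 < l)
    (hX : Measure.map X μ = expMeasure l1)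
    (hΛ : Measure.map Λ μ = expMeasure (l - l1))
    (hInd : iIndepFun ![X, Λ, S] μ)
    (P : ℝ → ℝ) (hP : ∀ x : ℝ, P x = ∫ ω, Real.exp (-x * S ω) ∂μ) :
    ∀ s : ℝ, s < l →
      (∫ ω in {ω | Λ ω < min (S ω) (X ω)}, Real.exp (s * Λ ω) ∂μ)
          / (μ {ω | Λ ω < min (S ω) (X ω)}).toReal
        = l * (1 - P (l - s)) / ((l - s) * (1 - P l)) :=
  stmt_5_general μ X Λ S hXm hΛm hSm hSnn l l1 hl1 hl hX hΛ hInd P hP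
end
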